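/- Let c ∈ (0,√2), set λ = √(2−c²)/2 and ω = √(2+c²)/2, and let θ_m < 0 and t* with ωt* ∈ (π, 2π) satisfy e^{2λt*} = θ_m² + 2λθ_m + 1 and cos(ωt*)/sin(ωt*) = (λθ_m + 1)/(ωθ_m). Then 1 − (c/π)·(√(2−c²) + θ_m) < 7. -/

import Mathlib

/-!
Put `u = ω t*` and `E = e^{λ t*}`. Since `λ² + ω² = 1`, the first equation says that
`(λθ_m + 1, ωθ_m)` has length `E`, and the second that it is parallel to `(cos u, sin u)`;
as `θ_m` and `sin u` are negative, `(λθ_m + 1, ωθ_m) = E (cos u, sin u)`. Then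
`θ_m + λ = E (λ cos u + ω sin u) ≥ -E`, so it suffices to show `c E ≤ 6π`.

With `α = arccos λ` (so `sin α = ω`) and `r = λ/ω` the same identities give
`E sin (u - π - α) = ω` and `E = e^{r u}`. Hence `u` exceeds `π + α` by at most `(π/2) ω / E`,
and `α - π/4 ≤ tan (α - π/4) = (1 - r)/(1 + r)`. If `c E > 6π`, the excess contributes at most
`λ c / 12 ≤ 1/24` to `r u`, and `c² = 2(1 - r²)/(1 + r²)`, so `(c E)²` is bounded by an explicit
function of `r ∈ [0, 1]` whose maximum (about `323`) is below `36π²`. That last bound is checked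
on a partition of `[0, 1]`, using that the rational factor decreases and the exponent increases
in `r`.
-/

open Real Set

theorem forall_mem_Icc_of_isChain {α : Type*} [LinearOrder α] {P : α → Prop} {R : α → α → Prop}
    (hR : ∀ a b, R a b → ∀ x ∈ Icc a b, P x) (a : α) (l : List α) (b : α)
    (hl : (a :: l ++ [b]).IsChain R) : ∀ x ∈ Icc a b, P x := by
  induction l generalizing a with
  | nil => exact hR a b (by simpa using hl)
  | cons c l ih =>
    rw [List.cons_append, List.cons_append, List.isChain_cons_cons] at hl
    intro x hx
    rcases le_total x c with hxc | hcx
    · exact hR a c hl.1 x ⟨hx.1, hxc⟩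
    · exact ih c hl.2 x ⟨hcx, hx.2⟩

noncomputable def expTaylorUpper (n : ℕ) (y : ℝ) : ℝ :=
  ∑ i ∈ Finset.range n, y ^ i / i.factorial + y ^ n * (n + 1) / (n.factorial * n)

theorem exp_le_expTaylorUpper_pow {x : ℝ} {m n : ℕ} (hm : 0 < m) (hn : 0 < n) (hx₀ : 0 ≤ x)
    (hx : x ≤ m) : exp x ≤ expTaylorUpper n (x / m) ^ m := by
  have hm' : (0 : ℝ) < m := by exact_mod_cast hm
  calc exp x = exp (x / m) ^ m := by rw [← exp_nat_mul, mul_div_cancel₀ _ hm'.ne']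
    _ ≤ _ := pow_le_pow_left₀ (exp_pos _).le
        (exp_bound' (div_nonneg hx₀ hm'.le) ((div_le_one hm').2 hx) hn) m

theorem mul_add_one_sub_div_one_add_le {k r b : ℝ} (hk : 2 ≤ k) (hr : 0 ≤ r) (hrb : r ≤ b) :
    r * (k + (1 - r) / (1 + r)) ≤ b * (k + (1 - b) / (1 + b)) := by
  have hb : 0 ≤ b := hr.trans hrb
  rw [← sub_nonneg]
  have key : b * (k + (1 - b) / (1 + b)) - r * (k + (1 - r) / (1 + r)) =
      (b - r) * (k - 2 + (3 + b + r + b * r) / ((1 + b) * (1 + r))) := by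
    field_simp
    ring
  rw [key]
  apply mul_nonneg (by linarith)
  have : 0 ≤ (3 + b + r + b * r) / ((1 + b) * (1 + r)) := by positivity
  linarith

theorem one_sub_sq_div_one_add_sq_le {a r : ℝ} (ha : 0 ≤ a) (har : a ≤ r) :
    (1 - r ^ 2) / (1 + r ^ 2) ≤ (1 - a ^ 2) / (1 + a ^ 2) := by
  rw [div_le_div_iff₀ (by positivity) (by positivity)]
  nlinarith [mul_le_mul har har ha (ha.trans har)]

-- `3.1415 < π < 3.1416`; the values at the endpoints suffice since the rational factor
-- decreases and the exponent increases in `r`.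
def BoundCertified (a b : ℝ) : Prop :=
  0 ≤ a ∧ b ≤ 1 ∧ 2 * (1 - a ^ 2) / (1 + a ^ 2) *
    expTaylorUpper 7 ((2 * b * (5 * 3.1416 / 4 + (1 - b) / (1 + b)) + 1 / 12) / 10) ^ 10
      < 36 * 3.1415 ^ 2

theorem sq_mul_exp_lt_of_mem_Icc {a b : ℝ} (hab : BoundCertified a b) : ∀ r ∈ Icc a b,
    2 * (1 - r ^ 2) / (1 + r ^ 2) * exp (2 * r * (5 * π / 4 + (1 - r) / (1 + r)) + 1 / 12)
      < 36 * π ^ 2 := by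
  obtain ⟨ha, hb, hcert⟩ := hab
  rintro r ⟨har, hrb⟩
  have hr0 : 0 ≤ r := ha.trans har
  have hb0 : 0 ≤ b := hr0.trans hrb
  set X := 2 * b * (5 * 3.1416 / 4 + (1 - b) / (1 + b)) + 1 / 12 with hXdef
  have hexponent : 2 * r * (5 * π / 4 + (1 - r) / (1 + r)) + 1 / 12 ≤ X := by
    have hmono :=
      mul_add_one_sub_div_one_add_le (k := 5 * π / 4) (by linarith [pi_gt_three]) hr0 hrb
    have : b * (5 * π / 4 + (1 - b) / (1 + b)) ≤ b * (5 * 3.1416 / 4 + (1 - b) / (1 + b)) := by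
      gcongr; linarith [pi_lt_d4]
    rw [hXdef]; linarith
  have hX : 0 ≤ X ∧ X ≤ 10 := by
    have : (1 - b) / (1 + b) ≤ 1 := (div_le_one (by linarith)).2 (by linarith)
    have : 0 ≤ (1 - b) / (1 + b) := div_nonneg (by linarith) (by linarith)
    rw [hXdef]; constructor <;> nlinarith
  have hexp : exp (2 * r * (5 * π / 4 + (1 - r) / (1 + r)) + 1 / 12)
      ≤ expTaylorUpper 7 (X / 10) ^ 10 := by
    refine (exp_le_exp.2 hexponent).trans ?_
    exact_mod_cast exp_le_expTaylorUpper_pow (m := 10) (by norm_num) (by norm_num) hX.1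
      (by exact_mod_cast hX.2)
  have hfac : 2 * (1 - r ^ 2) / (1 + r ^ 2) ≤ 2 * (1 - a ^ 2) / (1 + a ^ 2) := by
    rw [mul_div_assoc, mul_div_assoc]
    exact mul_le_mul_of_nonneg_left (one_sub_sq_div_one_add_sq_le ha har) two_pos.le
  have hfac0 : 0 ≤ 2 * (1 - r ^ 2) / (1 + r ^ 2) := by
    have : r ^ 2 ≤ 1 := by nlinarith
    positivity
  calc _ ≤ 2 * (1 - a ^ 2) / (1 + a ^ 2) * expTaylorUpper 7 (X / 10) ^ 10 :=
        mul_le_mul hfac hexp (exp_pos _).le (hfac0.trans hfac)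
    _ < 36 * 3.1415 ^ 2 := hcert
    _ ≤ 36 * π ^ 2 := by gcongr; linarith [pi_gt_d4]

theorem sq_mul_exp_lt : ∀ r ∈ Icc (0 : ℝ) 1,
    2 * (1 - r ^ 2) / (1 + r ^ 2) * exp (2 * r * (5 * π / 4 + (1 - r) / (1 + r)) + 1 / 12)
      < 36 * π ^ 2 :=
  forall_mem_Icc_of_isChain (R := BoundCertified) (fun _ _ => sq_mul_exp_lt_of_mem_Icc) 0
    [0.61, 0.715, 0.765, 0.795, 0.815, 0.83, 0.845, 0.86, 0.875, 0.89, 0.91, 0.94] 1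
    (by norm_num [BoundCertified, expTaylorUpper, Finset.sum_range_succ, Nat.factorial])

theorem le_pi_div_two_mul_sin_div_of_mul_sin_eq {α w E : ℝ} (hα₀ : 0 ≤ α) (hα : α ≤ π / 2)
    (hw : w < π - α) (hE : 1 ≤ E) (h : E * sin w = sin α) : w ≤ π / 2 * sin α / E := by
  have hE₀ : 0 < E := by linarith
  have hsinα : 0 ≤ sin α := sin_nonneg_of_nonneg_of_le_pi hα₀ (by linarith [pi_pos])
  rcases le_or_gt w 0 with hw₀ | hw₀
  · exact hw₀.trans (by positivity)
  have hw₂ : w ≤ π / 2 := by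
    by_contra! hw₂
    have : sin α < sin w := by
      rw [← sin_pi_sub w]
      exact sin_lt_sin_of_lt_of_le_pi_div_two (by linarith) (by linarith) (by linarith)
    nlinarith
  rw [le_div_iff₀ hE₀, ← h]
  have := mul_le_sin hw₀.le hw₂
  calc w * E = π / 2 * (2 / π * w) * E := by field_simp
    _ ≤ π / 2 * sin w * E := by gcongr
    _ = π / 2 * (E * sin w) := by ring

theorem arccos_le_pi_div_four_add {x y : ℝ} (hx : 0 < x) (hxy : x ≤ y) (h : x ^ 2 + y ^ 2 = 1) :
    arccos x ≤ π / 4 + (y - x) / (y + x) := by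
  have hy : 0 < y := hx.trans_le hxy
  have hcos : cos (arccos x) = x := cos_arccos (by linarith) (by nlinarith)
  have hsin : sin (arccos x) = y := by
    rw [sin_arccos, show 1 - x ^ 2 = y ^ 2 by linarith, sqrt_sq hy.le]
  have htan : tan (arccos x - π / 4) = (y - x) / (y + x) := by
    rw [tan_eq_sin_div_cos, sin_sub, cos_sub, hcos, hsin, cos_pi_div_four, sin_pi_div_four]
    have : (0 : ℝ) < √2 := by positivity
    field_simp
    ring
  rcases le_or_gt (arccos x - π / 4) 0 with hβ | hβ
  · have : 0 ≤ (y - x) / (y + x) := div_nonneg (by linarith) (by linarith)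
    linarith
  · have := le_tan hβ.le (by linarith [arccos_lt_pi_div_two.2 hx])
    linarith

theorem eq_mul_cos_and_eq_mul_sin {x y ρ t : ℝ} (hρ : 0 < ρ) (hnorm : x ^ 2 + y ^ 2 = ρ ^ 2)
    (hpar : cos t * y = sin t * x) (hy : y < 0) (ht : sin t < 0) :
    x = ρ * cos t ∧ y = ρ * sin t := by
  have hpyth := sin_sq_add_cos_sq t
  have hy' : y = ρ * sin t := by
    have : (y - ρ * sin t) * (y + ρ * sin t) = 0 := by
      linear_combination sin t ^ 2 * hnorm + (cos t * y + sin t * x) * hpar - y ^ 2 * hpyth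
    rcases mul_eq_zero.1 this with h | h
    · linarith
    · nlinarith
  refine ⟨?_, hy'⟩
  have : sin t * (x - ρ * cos t) = 0 := by linear_combination -hpar + cos t * hy'
  linarith [(mul_eq_zero.1 this).resolve_left ht.ne]

theorem neg_sub_le_of_eq_mul_cos_of_eq_mul_sin {lam ω θ E u : ℝ} (hsum : lam ^ 2 + ω ^ 2 = 1)
    (hE : 0 ≤ E) (hx : lam * θ + 1 = E * cos u) (hy : ω * θ = E * sin u) : -lam - E ≤ θ := by
  have hsq : (lam * cos u + ω * sin u) ^ 2 ≤ 1 := by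
    nlinarith [sq_nonneg (lam * sin u - ω * cos u), sin_sq_add_cos_sq u]
  have hk : -1 ≤ lam * cos u + ω * sin u := by nlinarith
  have : θ + lam = E * (lam * cos u + ω * sin u) := by
    linear_combination lam * hx + ω * hy - θ * hsum
  nlinarith

theorem mul_sin_sub_pi_sub_arccos_eq {lam ω θ E u : ℝ} (hω : 0 ≤ ω) (hsum : lam ^ 2 + ω ^ 2 = 1)
    (hx : lam * θ + 1 = E * cos u) (hy : ω * θ = E * sin u) :
    E * sin (u - π - arccos lam) = ω := by
  rw [sin_sub, sin_sub_pi, cos_sub_pi, cos_arccos (by nlinarith) (by nlinarith), sin_arccos,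
    show 1 - lam ^ 2 = ω ^ 2 by linarith, sqrt_sq hω]
  linear_combination -ω * hx + lam * hy

theorem le_five_pi_div_four_add_of_mul_sin_eq {lam ω u : ℝ} (hlam : 0 < lam) (hω : 0 < ω)
    (hlamω : lam ≤ ω) (hsum : lam ^ 2 + ω ^ 2 = 1) (hu : u ∈ Ioo π (2 * π))
    (h : exp (lam / ω * u) * sin (u - π - arccos lam) = ω) :
    u ≤ 5 * π / 4 + (ω - lam) / (ω + lam) + π / 2 * ω / exp (lam / ω * u) := by
  have hsinα : sin (arccos lam) = ω := by
    rw [sin_arccos, show 1 - lam ^ 2 = ω ^ 2 by linarith, sqrt_sq hω.le]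
  have hE : 1 ≤ exp (lam / ω * u) :=
    one_le_exp (mul_nonneg (div_pos hlam hω).le (pi_pos.trans hu.1).le)
  have hw := le_pi_div_two_mul_sin_div_of_mul_sin_eq (arccos_nonneg lam)
    (arccos_le_pi_div_two.2 hlam.le) (by linarith [hu.2]) hE (h.trans hsinα.symm)
  rw [hsinα] at hw
  linarith [arccos_le_pi_div_four_add hlam hlamω hsum]

theorem mul_exp_le_six_pi {c lam ω u : ℝ} (hc : 0 < c) (hlam : 0 < lam) (hω : 0 < ω)
    (hsum : lam ^ 2 + ω ^ 2 = 1) (hcsq : c ^ 2 = 2 * (ω ^ 2 - lam ^ 2)) (hu : u ∈ Ioo π (2 * π))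
    (h : exp (lam / ω * u) * sin (u - π - arccos lam) = ω) : c * exp (lam / ω * u) ≤ 6 * π := by
  have hlamω : lam ≤ ω := by nlinarith
  have hu' := le_five_pi_div_four_add_of_mul_sin_eq hlam hω hlamω hsum hu h
  set r := lam / ω with hr
  set E := exp (r * u)
  have hr₀ : 0 < r := div_pos hlam hω
  have hr₁ : r ≤ 1 := (div_le_one hω).2 hlamω
  have hratio : (ω - lam) / (ω + lam) = (1 - r) / (1 + r) := by rw [hr]; field_simp
  have hc2 : c ^ 2 = 2 * (1 - r ^ 2) / (1 + r ^ 2) := by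
    rw [hr]; field_simp; linear_combination hcsq + c ^ 2 * hsum
  by_contra! hlt
  have hlamc : lam * c ≤ 1 / 2 := by nlinarith [sq_nonneg (4 * lam ^ 2 - 1)]
  have hexcess : r * (π / 2 * ω / E) ≤ 1 / 24 := by
    have : r * (π / 2 * ω / E) = π / 2 * lam / E := by rw [hr]; field_simp
    rw [this, div_le_iff₀ (exp_pos _)]
    nlinarith [pi_pos]
  have hsq : (c * E) ^ 2 < (6 * π) ^ 2 :=
    calc (c * E) ^ 2 = c ^ 2 * exp (2 * (r * u)) := by rw [mul_pow, ← exp_nat_mul]; norm_num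
      _ ≤ 2 * (1 - r ^ 2) / (1 + r ^ 2) *
            exp (2 * r * (5 * π / 4 + (1 - r) / (1 + r)) + 1 / 12) := by
          rw [← hc2, ← hratio]; gcongr; nlinarith
      _ < 36 * π ^ 2 := sq_mul_exp_lt r ⟨hr₀.le, hr₁⟩
      _ = (6 * π) ^ 2 := by ring
  nlinarith [pi_pos]

theorem stmt19 (c : ℝ) (hc : c ∈ Set.Ioo 0 (Real.sqrt 2))
    (lam ω : ℝ) (hlam : lam = Real.sqrt (2 - c ^ 2) / 2)
    (hω : ω = Real.sqrt (2 + c ^ 2) / 2)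
    (θm tstar : ℝ) (hθm : θm < 0)
    (ht : ω * tstar ∈ Set.Ioo Real.pi (2 * Real.pi))
    (heq1 : Real.exp (2 * lam * tstar) = θm ^ 2 + 2 * lam * θm + 1)
    (heq2 : Real.cos (ω * tstar) / Real.sin (ω * tstar) = (lam * θm + 1) / (ω * θm)) :
    1 - (c / Real.pi) * (Real.sqrt (2 - c ^ 2) + θm) < 7 := by
  obtain ⟨hc₀, hc₂⟩ := hc
  have hcsq : c ^ 2 < 2 := (lt_sqrt hc₀.le).1 hc₂
  have hlam₀ : 0 < lam := by rw [hlam]; exact div_pos (sqrt_pos.2 (by linarith)) two_pos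
  have hω₀ : 0 < ω := by rw [hω]; positivity
  have hlamsq : lam ^ 2 = (2 - c ^ 2) / 4 := by rw [hlam, div_pow, sq_sqrt (by linarith)]; norm_num
  have hωsq : ω ^ 2 = (2 + c ^ 2) / 4 := by rw [hω, div_pow, sq_sqrt (by positivity)]; norm_num
  have hsum : lam ^ 2 + ω ^ 2 = 1 := by rw [hlamsq, hωsq]; ring
  set u := ω * tstar with hu
  have hsinu : sin u < 0 := by
    simpa using
      sin_neg_of_neg_of_neg_pi_lt (x := u - 2 * π) (by linarith [ht.2]) (by linarith [ht.1])
  have hθω : ω * θm < 0 := mul_neg_of_pos_of_neg hω₀ hθm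
  obtain ⟨hx, hy⟩ := eq_mul_cos_and_eq_mul_sin (x := lam * θm + 1) (exp_pos (lam * tstar))
    (by rw [← exp_nat_mul]; push_cast; rw [← mul_assoc, heq1]; linear_combination θm ^ 2 * hsum)
    (by rw [div_eq_div_iff hsinu.ne hθω.ne] at heq2; linarith) hθω hsinu
  have hru : lam / ω * u = lam * tstar := by rw [hu]; field_simp
  have hcE := mul_exp_le_six_pi hc₀ hlam₀ hω₀ hsum (by rw [hlamsq, hωsq]; ring) ht
    (by rw [hru]; exact mul_sin_sub_pi_sub_arccos_eq hω₀.le hsum hx hy)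
  rw [hru] at hcE
  have hθ := neg_sub_le_of_eq_mul_cos_of_eq_mul_sin hsum (exp_pos _).le hx hy
  have hlower : -(6 * π) < c * (2 * lam + θm) := by
    nlinarith [mul_le_mul_of_nonneg_left hθ hc₀.le, mul_pos hc₀ hlam₀]
  rw [show √(2 - c ^ 2) = 2 * lam by rw [hlam]; ring, div_mul_eq_mul_div]
  have : -6 < c * (2 * lam + θm) / π := by rw [lt_div_iff₀ pi_pos]; linarith
  linarith
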